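/- Let G be a locally finite graph and x ~ y adjacent vertices of equal degree d with no common neighbors. Then κ₀(x,y) = 0 if and only if there exists a perfect matching between S₁(x) and S₁(y), i.e. a bijection φ : S₁(x) → S₁(y) with d(z, φ(z)) = 1 for all z ∈ S₁(x). -/

import Mathlib

/-!
Since `S₁(x)` and `S₁(y)` are disjoint, every transport plan between the uniform measures on them
moves all of its mass over distance at least `1`. If `A ⊆ S₁(x)` has `B` as its set of neighbours
in `S₁(y)`, at least `(|A| - |B|)/d` of the mass leaving `A` lands outside `B`, at distance at
least `2`, so `W₁ ≥ 1 + (|A| - |B|)/d`. Hence `W₁ = 1`, i.e. `κ₀ = 0`, forces Hall's condition,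
which yields the perfect matching; conversely a perfect matching is a plan of cost exactly `1`.
-/

open scoped Classical BigOperators

noncomputable section

namespace OllivierRicci

variable {V : Type*}

/-- A probability measure on the vertex set, given as a nonnegative function summing to 1. -/
def IsProb (μ : V → ℝ) : Prop := (∀ x, 0 ≤ μ x) ∧ HasSum μ 1

/-- A transport plan (coupling) between two measures. -/
def IsPlan (μ₁ μ₂ : V → ℝ) (π : V → V → ℝ) : Prop :=
  (∀ x y, 0 ≤ π x y) ∧ (∀ x, HasSum (fun y => π x y) (μ₁ x)) ∧
    (∀ y, HasSum (fun x => π x y) (μ₂ y))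

/-- The transport cost of a plan with respect to the shortest-path metric. -/
def cost (G : SimpleGraph V) (π : V → V → ℝ) : ℝ :=
  ∑' p : V × V, (G.dist p.1 p.2 : ℝ) * π p.1 p.2

/-- The 1-Wasserstein distance between two measures on the vertex set. -/
def W1 (G : SimpleGraph V) (μ₁ μ₂ : V → ℝ) : ℝ :=
  sInf {c : ℝ | ∃ π : V → V → ℝ, IsPlan μ₁ μ₂ π ∧ cost G π = c}

/-- The lazy random walk measure `μ_x^α`. -/
def mu (G : SimpleGraph V) (α : ℝ) (x : V) : V → ℝ := fun z =>
  if z = x then α else if G.Adj x z then (1 - α) / ((G.neighborSet x).ncard : ℝ) else 0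

/-- The `α`-Ollivier-Ricci curvature `κ_α(x,y)`. -/
def kappaAlpha (G : SimpleGraph V) (α : ℝ) (x y : V) : ℝ :=
  1 - W1 G (mu G α x) (mu G α y) / (G.dist x y : ℝ)

/-- The Lin-Lu-Yau curvature `κ(x,y) = lim_{α → 1} κ_α(x,y)/(1-α)`. -/
def kappa (G : SimpleGraph V) (x y : V) : ℝ :=
  Filter.limUnder (nhdsWithin (1 : ℝ) (Set.Iio 1)) fun α => kappaAlpha G α x y / (1 - α)

/-- The set of common neighbors `△(x,y)`. -/
def triangleSet (G : SimpleGraph V) (x y : V) : Set V :=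
  G.neighborSet x ∩ G.neighborSet y

/-- `R_x(x,y) = S₁(x) \ (△(x,y) ∪ {y})`. -/
def RxSet (G : SimpleGraph V) (x y : V) : Set V :=
  G.neighborSet x \ (triangleSet G x y ∪ {y})

/-- `R_y(x,y) = S₁(y) \ (△(x,y) ∪ {x})`. -/
def RySet (G : SimpleGraph V) (x y : V) : Set V :=
  G.neighborSet y \ (triangleSet G x y ∪ {x})

/-- The cost `∑_{z ∈ A} d(z, φ(z))` of an assignment `φ` on the set `A`. -/
def assignCostOf (G : SimpleGraph V) (A : Set V) (φ : V → V) : ℝ :=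
  ∑ᶠ z ∈ A, (G.dist z (φ z) : ℝ)

/-- The minimal cost over all assignments (bijections) between `A` and `B`. -/
def assignCost (G : SimpleGraph V) (A B : Set V) : ℝ :=
  sInf {c : ℝ | ∃ φ : V → V, Set.BijOn φ A B ∧ assignCostOf G A φ = c}

/-- `φ` is an optimal assignment between `A` and `B`. -/
def IsOptAssign (G : SimpleGraph V) (A B : Set V) (φ : V → V) : Prop :=
  Set.BijOn φ A B ∧ assignCostOf G A φ = assignCost G A B

end OllivierRicci

namespace OllivierRicci

open Finset SimpleGraph

variable {V : Type*}

section Plan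

variable {μ₁ μ₂ : V → ℝ} {π : V → V → ℝ}

lemma IsPlan.le_left (hπ : IsPlan μ₁ μ₂ π) (z w : V) : π z w ≤ μ₁ z :=
  le_hasSum (hπ.2.1 z) w fun w' _ => hπ.1 z w'

lemma IsPlan.le_right (hπ : IsPlan μ₁ μ₂ π) (z w : V) : π z w ≤ μ₂ w :=
  le_hasSum (hπ.2.2 w) z fun z' _ => hπ.1 z' w

lemma IsPlan.eq_zero_of_left (hπ : IsPlan μ₁ μ₂ π) {z : V} (hz : μ₁ z = 0) (w : V) :
    π z w = 0 :=
  le_antisymm (hz ▸ hπ.le_left z w) (hπ.1 z w)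

lemma IsPlan.eq_zero_of_right (hπ : IsPlan μ₁ μ₂ π) {w : V} (hw : μ₂ w = 0) (z : V) :
    π z w = 0 :=
  le_antisymm (hw ▸ hπ.le_right z w) (hπ.1 z w)

lemma IsPlan.sum_right_eq (hπ : IsPlan μ₁ μ₂ π) {t : Finset V} (ht : ∀ w ∉ t, μ₂ w = 0)
    (z : V) : ∑ w ∈ t, π z w = μ₁ z :=
  (hasSum_sum_of_ne_finset_zero fun w hw => hπ.eq_zero_of_right (ht w hw) z).unique (hπ.2.1 z)

lemma IsPlan.sum_left_le (hπ : IsPlan μ₁ μ₂ π) (s : Finset V) (w : V) :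
    ∑ z ∈ s, π z w ≤ μ₂ w :=
  sum_le_hasSum s (fun z _ => hπ.1 z w) (hπ.2.2 w)

lemma IsPlan.cost_eq_sum (hπ : IsPlan μ₁ μ₂ π) (G : SimpleGraph V) {s t : Finset V}
    (hs : ∀ z ∉ s, μ₁ z = 0) (ht : ∀ w ∉ t, μ₂ w = 0) :
    cost G π = ∑ z ∈ s, ∑ w ∈ t, (G.dist z w : ℝ) * π z w := by
  rw [cost, ← sum_product']
  refine tsum_eq_sum fun p hp => ?_
  rcases not_and_or.mp (mem_product.not.mp hp) with h | h
  · rw [hπ.eq_zero_of_left (hs _ h), mul_zero]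
  · rw [hπ.eq_zero_of_right (ht _ h), mul_zero]

lemma IsPlan.sum_sub_sum_le (hπ : IsPlan μ₁ μ₂ π) {t : Finset V} (ht : ∀ w ∉ t, μ₂ w = 0)
    (A : Finset V) {B : Finset V} (hB : B ⊆ t) :
    ∑ z ∈ A, μ₁ z - ∑ w ∈ B, μ₂ w ≤ ∑ z ∈ A, ∑ w ∈ t \ B, π z w := by
  have hsplit : ∀ z, ∑ w ∈ t \ B, π z w = μ₁ z - ∑ w ∈ B, π z w := fun z => by
    rw [eq_sub_iff_add_eq, sum_sdiff hB, hπ.sum_right_eq ht]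
  rw [sum_congr rfl fun z _ => hsplit z, sum_sub_distrib, sum_comm]
  gcongr with w
  exact hπ.sum_left_le A w

lemma IsPlan.sum_add_sum_sub_sum_le_cost (hπ : IsPlan μ₁ μ₂ π) (G : SimpleGraph V)
    {s t A B : Finset V} (hs : ∀ z ∉ s, μ₁ z = 0) (ht : ∀ w ∉ t, μ₂ w = 0)
    (hA : A ⊆ s) (hB : B ⊆ t) (h₁ : ∀ z ∈ s, ∀ w ∈ t, 1 ≤ G.dist z w)
    (h₂ : ∀ z ∈ A, ∀ w ∈ t \ B, 2 ≤ G.dist z w) :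
    ∑ z ∈ s, μ₁ z + (∑ z ∈ A, μ₁ z - ∑ w ∈ B, μ₂ w) ≤ cost G π := by
  have hrow : ∀ z ∈ s, ∑ w ∈ t, π z w + (if z ∈ A then ∑ w ∈ t \ B, π z w else 0) ≤
      ∑ w ∈ t, (G.dist z w : ℝ) * π z w := by
    intro z hz
    have hle : ∀ u ⊆ t, ∑ w ∈ u, π z w ≤ ∑ w ∈ u, (G.dist z w : ℝ) * π z w :=
      fun u hu => sum_le_sum fun w hw =>
        le_mul_of_one_le_left (hπ.1 z w) (by exact_mod_cast h₁ z hz w (hu hw))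
    split_ifs with hzA
    · have htwo : ∑ w ∈ t \ B, 2 * π z w ≤ ∑ w ∈ t \ B, (G.dist z w : ℝ) * π z w :=
        sum_le_sum fun w hw =>
          mul_le_mul_of_nonneg_right (by exact_mod_cast h₂ z hzA w hw) (hπ.1 z w)
      rw [← mul_sum] at htwo
      rw [← sum_sdiff hB, ← sum_sdiff hB (f := fun w => (G.dist z w : ℝ) * π z w)]
      linarith [hle B hB]
    · simpa using hle t subset_rfl
  calc ∑ z ∈ s, μ₁ z + (∑ z ∈ A, μ₁ z - ∑ w ∈ B, μ₂ w)
      ≤ ∑ z ∈ s, ∑ w ∈ t, π z w + ∑ z ∈ A, ∑ w ∈ t \ B, π z w := by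
        rw [sum_congr rfl fun z _ => hπ.sum_right_eq ht z]
        gcongr
        exact hπ.sum_sub_sum_le ht A hB
    _ = ∑ z ∈ s, (∑ w ∈ t, π z w + if z ∈ A then ∑ w ∈ t \ B, π z w else 0) := by
        rw [sum_add_distrib, sum_ite_mem, inter_eq_right.mpr hA]
    _ ≤ ∑ z ∈ s, ∑ w ∈ t, (G.dist z w : ℝ) * π z w := sum_le_sum hrow
    _ = cost G π := (hπ.cost_eq_sum G hs ht).symm

lemma cost_nonneg (G : SimpleGraph V) (hπ : ∀ z w, 0 ≤ π z w) : 0 ≤ cost G π :=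
  tsum_nonneg fun p => mul_nonneg (Nat.cast_nonneg _) (hπ p.1 p.2)

lemma W1_le_cost (G : SimpleGraph V) (hπ : IsPlan μ₁ μ₂ π) : W1 G μ₁ μ₂ ≤ cost G π :=
  csInf_le ⟨0, by rintro _ ⟨π', hπ', rfl⟩; exact cost_nonneg G hπ'.1⟩ ⟨π, hπ, rfl⟩

lemma le_W1 (G : SimpleGraph V) {c : ℝ} (hne : ∃ π, IsPlan μ₁ μ₂ π)
    (h : ∀ π, IsPlan μ₁ μ₂ π → c ≤ cost G π) : c ≤ W1 G μ₁ μ₂ := by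
  obtain ⟨π, hπ⟩ := hne
  exact le_csInf ⟨_, π, hπ, rfl⟩ fun _ ⟨π', hπ', hc⟩ => hc ▸ h π' hπ'

/-- `W1 ≠ 0` rules out the junk value `sInf ∅ = 0` taken when there is no plan. -/
lemma exists_cost_lt_of_W1_lt (G : SimpleGraph V) {c : ℝ} (hW : W1 G μ₁ μ₂ ≠ 0)
    (h : W1 G μ₁ μ₂ < c) : ∃ π, IsPlan μ₁ μ₂ π ∧ cost G π < c := by
  have hne : {c : ℝ | ∃ π, IsPlan μ₁ μ₂ π ∧ cost G π = c}.Nonempty :=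
    Set.nonempty_iff_ne_empty.mpr fun h0 => hW (by rw [W1, h0, Real.sInf_empty])
  obtain ⟨_, ⟨π, hπ, rfl⟩, hlt⟩ := exists_lt_of_csInf_lt hne h
  exact ⟨π, hπ, hlt⟩

lemma isPlan_ite_eq {s : Set V} {φ : V → V} (hφ : Set.InjOn φ s) (h₁ : ∀ z, 0 ≤ μ₁ z)
    (hs : ∀ z ∉ s, μ₁ z = 0) (hμ : ∀ z ∈ s, μ₂ (φ z) = μ₁ z) (ht : ∀ w ∉ φ '' s, μ₂ w = 0) :
    IsPlan μ₁ μ₂ fun z w => if w = φ z then μ₁ z else 0 := by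
  refine ⟨fun z w => ite_nonneg (h₁ z) le_rfl, fun z => hasSum_ite_eq (φ z) (μ₁ z), fun w => ?_⟩
  by_cases hw : w ∈ φ '' s
  · obtain ⟨z₀, hz₀, rfl⟩ := hw
    convert hasSum_single (f := fun z => if φ z₀ = φ z then μ₁ z else 0) z₀ _ using 1
    · simp [hμ z₀ hz₀]
    · exact fun z hz => ite_eq_right_iff.mpr fun h => hs z fun hzs => hz (hφ hzs hz₀ h.symm)
  · rw [ht w hw]
    exact hasSum_zero.congr_fun fun z =>
      ite_eq_right_iff.mpr fun h => hs z fun hzs => hw ⟨z, hzs, h.symm⟩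

end Plan

theorem exists_bijOn_of_forall_card_le {α β : Type*} [Nonempty β] (r : α → β → Prop)
    {s : Finset α} {t : Finset β} (hts : #t ≤ #s)
    (hall : ∀ A ⊆ s, #A ≤ #{w ∈ t | ∃ z ∈ A, r z w}) :
    ∃ φ : α → β, Set.BijOn φ s t ∧ ∀ z ∈ s, r z (φ z) := by
  obtain ⟨f, hf, hft⟩ := (all_card_le_biUnion_card_iff_exists_injective
    fun z : s => {w ∈ t | r z w}).mp fun S => by
      convert hall (S.map (Function.Embedding.subtype _))
        (fun z hz => property_of_mem_map_subtype S hz) using 1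
      · simp
      · congr 1
        ext w
        simp only [mem_biUnion, mem_filter, mem_map, Function.Embedding.coe_subtype]
        grind
  have hft' : ∀ z : s, f z ∈ t ∧ r z (f z) := fun z => mem_filter.mp (hft z)
  let φ : α → β := fun z => if hz : z ∈ s then f ⟨z, hz⟩ else Classical.arbitrary β
  have hφ : ∀ z (hz : z ∈ s), φ z = f ⟨z, hz⟩ := fun z hz => dif_pos hz
  have hmaps : Set.MapsTo φ s t := fun z hz => hφ z hz ▸ (hft' ⟨z, hz⟩).1
  have hinj : Set.InjOn φ s := fun a ha b hb hab =>
    congrArg Subtype.val (hf ((hφ a ha).symm.trans (hab.trans (hφ b hb))))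
  exact ⟨φ, ⟨hmaps, hinj, surjOn_of_injOn_of_card_le φ hmaps hinj hts⟩,
    fun z hz => hφ z hz ▸ (hft' ⟨z, hz⟩).2⟩

section Graph

variable {G : SimpleGraph V} {x y : V}

lemma one_le_dist_of_triangleSet_eq_empty (hconn : G.Connected) (htri : triangleSet G x y = ∅)
    {z w : V} (hz : G.Adj x z) (hw : G.Adj y w) : 1 ≤ G.dist z w :=
  hconn.pos_dist_of_ne fun h => (htri ▸ ⟨hz, h ▸ hw⟩ : z ∈ (∅ : Set V))

variable [G.LocallyFinite]

lemma ncard_neighborSet_eq_degree (x : V) : (G.neighborSet x).ncard = G.degree x := by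
  rw [Set.ncard_eq_toFinset_card', ← G.card_neighborFinset_eq_degree]
  rfl

lemma mu_zero_apply (x z : V) :
    mu G 0 x z = if z ∈ G.neighborFinset x then (G.degree x : ℝ)⁻¹ else 0 := by
  by_cases h : z = x
  · subst h; simp [mu]
  · simp [mu, h, ncard_neighborSet_eq_degree]

lemma mu_zero_eq_zero {x z : V} (hz : z ∉ G.neighborFinset x) : mu G 0 x z = 0 := by
  rw [mu_zero_apply, if_neg hz]

lemma sum_mu_zero {A : Finset V} (hA : A ⊆ G.neighborFinset x) :
    ∑ z ∈ A, mu G 0 x z = #A / G.degree x := by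
  rw [sum_congr rfl fun z hz => by rw [mu_zero_apply, if_pos (hA hz)]]
  simp [div_eq_mul_inv]

lemma sum_neighborFinset_mu_zero (hadj : G.Adj x y) : ∑ z ∈ G.neighborFinset x, mu G 0 x z = 1 := by
  rw [sum_mu_zero subset_rfl, G.card_neighborFinset_eq_degree,
    div_self (Nat.cast_ne_zero.mpr (G.degree_pos_iff_exists_adj x |>.mpr ⟨y, hadj⟩).ne')]

theorem one_add_card_sub_card_div_le_cost (hconn : G.Connected) (hadj : G.Adj x y)
    (hdeg : G.degree x = G.degree y) (htri : triangleSet G x y = ∅) {π : V → V → ℝ}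
    (hπ : IsPlan (mu G 0 x) (mu G 0 y) π) {A B : Finset V} (hA : A ⊆ G.neighborFinset x)
    (hB : B ⊆ G.neighborFinset y)
    (hAB : ∀ z ∈ A, ∀ w ∈ G.neighborFinset y, G.Adj z w → w ∈ B) :
    1 + (#A - #B : ℝ) / G.degree x ≤ cost G π := by
  have h₁ : ∀ z ∈ G.neighborFinset x, ∀ w ∈ G.neighborFinset y, 1 ≤ G.dist z w :=
    fun z hz w hw => one_le_dist_of_triangleSet_eq_empty hconn htri
      ((G.mem_neighborFinset x z).mp hz) ((G.mem_neighborFinset y w).mp hw)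
  have h₂ : ∀ z ∈ A, ∀ w ∈ G.neighborFinset y \ B, 2 ≤ G.dist z w := by
    intro z hz w hw
    obtain ⟨hwy, hwB⟩ := mem_sdiff.mp hw
    have hne : G.dist z w ≠ 1 := fun h => hwB (hAB z hz w hwy (G.dist_eq_one_iff_adj.mp h))
    have := h₁ z (hA hz) w hwy
    omega
  have := hπ.sum_add_sum_sub_sum_le_cost G (fun _ => mu_zero_eq_zero) (fun _ => mu_zero_eq_zero)
    hA hB h₁ h₂
  rwa [sum_neighborFinset_mu_zero hadj, sum_mu_zero hA, sum_mu_zero hB, ← hdeg, ← sub_div] at this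

theorem one_le_cost (hconn : G.Connected) (hadj : G.Adj x y) (hdeg : G.degree x = G.degree y)
    (htri : triangleSet G x y = ∅) {π : V → V → ℝ} (hπ : IsPlan (mu G 0 x) (mu G 0 y) π) :
    1 ≤ cost G π := by
  simpa using one_add_card_sub_card_div_le_cost hconn hadj hdeg htri hπ
    (empty_subset _) (empty_subset _) (by simp)

theorem W1_mu_zero_eq_one_of_bijOn (hconn : G.Connected) (hadj : G.Adj x y)
    (hdeg : G.degree x = G.degree y) (htri : triangleSet G x y = ∅) {φ : V → V}
    (hφ : Set.BijOn φ (G.neighborSet x) (G.neighborSet y))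
    (hφadj : ∀ z ∈ G.neighborSet x, G.Adj z (φ z)) :
    W1 G (mu G 0 x) (mu G 0 y) = 1 := by
  have hπ : IsPlan (mu G 0 x) (mu G 0 y) fun z w => if w = φ z then mu G 0 x z else 0 := by
    refine isPlan_ite_eq hφ.injOn (fun z => ?_) (fun z hz => ?_) (fun z hz => ?_) (fun w hw => ?_)
    · rw [mu_zero_apply]; split_ifs <;> positivity
    · exact mu_zero_eq_zero (by simpa using hz)
    · rw [mu_zero_apply, mu_zero_apply, if_pos (by simpa using hφ.mapsTo hz),
        if_pos (by simpa using hz), hdeg]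
    · exact mu_zero_eq_zero (by simpa [hφ.image_eq] using hw)
  have hcost : cost G (fun z w => if w = φ z then mu G 0 x z else 0) = 1 := by
    rw [hπ.cost_eq_sum G (s := G.neighborFinset x) (t := G.neighborFinset y)
      (fun _ => mu_zero_eq_zero) (fun _ => mu_zero_eq_zero)]
    calc ∑ z ∈ G.neighborFinset x, ∑ w ∈ G.neighborFinset y,
          (G.dist z w : ℝ) * (if w = φ z then mu G 0 x z else 0)
        = ∑ z ∈ G.neighborFinset x, mu G 0 x z := sum_congr rfl fun z hz => by
          rw [mem_neighborFinset] at hz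
          simp [show G.Adj y (φ z) from hφ.mapsTo hz, G.dist_eq_one_iff_adj.mpr (hφadj z hz)]
      _ = 1 := sum_neighborFinset_mu_zero hadj
  exact le_antisymm (hcost ▸ W1_le_cost G hπ)
    (le_W1 G ⟨_, hπ⟩ fun π' hπ' => one_le_cost hconn hadj hdeg htri hπ')

theorem card_le_card_filter_adj_of_W1_mu_zero_eq_one (hconn : G.Connected) (hadj : G.Adj x y)
    (hdeg : G.degree x = G.degree y) (htri : triangleSet G x y = ∅)
    (hW : W1 G (mu G 0 x) (mu G 0 y) = 1) {A : Finset V} (hA : A ⊆ G.neighborFinset x) :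
    #A ≤ #{w ∈ G.neighborFinset y | ∃ z ∈ A, G.Adj z w} := by
  have hdeg_pos : (0 : ℝ) < G.degree x :=
    Nat.cast_pos.mpr (G.degree_pos_iff_exists_adj x |>.mpr ⟨y, hadj⟩)
  obtain ⟨π, hπ, hlt⟩ := exists_cost_lt_of_W1_lt G (c := 1 + (G.degree x : ℝ)⁻¹)
    (hW ▸ one_ne_zero) (hW ▸ lt_add_of_pos_right 1 (inv_pos.mpr hdeg_pos))
  have hle := one_add_card_sub_card_div_le_cost hconn hadj hdeg htri hπ hA
    (filter_subset (fun w => ∃ z ∈ A, G.Adj z w) _)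
    fun z hz w hw h => mem_filter.mpr ⟨hw, z, hz, h⟩
  have : (#A : ℝ) < #{w ∈ G.neighborFinset y | ∃ z ∈ A, G.Adj z w} + 1 := by
    rw [← sub_lt_iff_lt_add', ← div_lt_div_iff_of_pos_right hdeg_pos, one_div]
    linarith
  exact_mod_cast Nat.lt_succ_iff.mp (by exact_mod_cast this)

end Graph

end OllivierRicci

/-- for a triangle-free edge, κ₀ = 0 iff there is a perfect matching
between the neighborhoods. -/
theorem OllivierRicci.kappaZero_eq_zero_iff_perfect_matching {V : Type*}
    (G : SimpleGraph V) (hlf : G.LocallyFinite) (hconn : G.Connected) (x y : V)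
    (hadj : G.Adj x y) (d : ℕ)
    (hdx : (G.neighborSet x).ncard = d) (hdy : (G.neighborSet y).ncard = d)
    (htri : OllivierRicci.triangleSet G x y = ∅) :
    OllivierRicci.kappaAlpha G 0 x y = 0 ↔
      ∃ φ : V → V, Set.BijOn φ (G.neighborSet x) (G.neighborSet y) ∧
        ∀ z ∈ G.neighborSet x, G.dist z (φ z) = 1 := by
  let _ := hlf
  have : Nonempty V := ⟨x⟩
  have hdeg : G.degree x = G.degree y := by
    rw [← OllivierRicci.ncard_neighborSet_eq_degree, ← OllivierRicci.ncard_neighborSet_eq_degree,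
      hdx, hdy]
  simp only [SimpleGraph.dist_eq_one_iff_adj]
  rw [OllivierRicci.kappaAlpha, G.dist_eq_one_iff_adj.mpr hadj, Nat.cast_one, div_one,
    sub_eq_zero, eq_comm]
  constructor
  · intro hW
    simpa using OllivierRicci.exists_bijOn_of_forall_card_le G.Adj hdeg.ge fun A hA =>
      OllivierRicci.card_le_card_filter_adj_of_W1_mu_zero_eq_one hconn hadj hdeg htri hW hA
  · rintro ⟨φ, hφ, hφadj⟩
    exact OllivierRicci.W1_mu_zero_eq_one_of_bijOn hconn hadj hdeg htri hφ hφadj
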